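/- (Corollary 3.) Fix N, the complex data f_1,…,f_K and b_{ki}, and all real parameters except the powers, and for fixed E_u > 0 set p_i = E_u/M for every i. Define Γ_k = τ²ι²κ²β²α_k²·c_{k,1}/((δ+1)²(μ_k+1)²) and, for i ≠ k, Γ_ki = τ²ι²κ²β²α_kα_i·z_{ki,1}/((δ+1)²(μ_k+1)(μ_i+1)). Then as M → ∞ the closed-form rate converges: R̃_k → log₂(1 + E_uΓ_k/(Σ_{i≠k} E_uΓ_ki + (σ_RF²+σ²)τϖ_k)). -/

import Mathlib

/-!
With `p_i = E_u/M`, the signal term `p_k τ² ξ_k` and each interference term `p_i τ² γ_ki` are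
affine in `M`, with slopes `E_u Γ_k` and `E_u Γ_ki`, while `ζ` is linear in the powers, so the
ADC-distortion term `τ(1-τ)ϖ_k ζ M` stays bounded and the thermal-noise term grows like
`(σ_RF²+σ²)τϖ_k M`. The SINR is therefore a ratio of two affine functions of `M` and tends to
the ratio of their slopes. The denominator slope is positive because `ϖ_k > 0`, and the limit SINR
is nonnegative because `c_{k,1}` and `z_{ki,1}` are sums of nonnegative terms, so `log₂` is
continuous at `1 + SINR`.
-/

open MeasureTheory ProbabilityTheory Filter Finset

noncomputable section
/-- Coefficient `c_{k,1}`. -/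
def ck1 (N : ℕ) (μk δ ρ : ℝ) (fk : ℂ) : ℝ :=
  (ρ^2*(μk+δ+1)^2 + (1-ρ^2)*δ^2*μk + δ^2) * (N:ℝ)^2
  + (((2*μk+3*δ+2-δ*μk)*ρ^2 + (1+μk)*δ) * δ*μk*(‖fk‖)^2
     + (μk+δ+2)^2 - ρ^2*(μk+δ+1)^2 - 2*ρ^2*δ*μk - 2) * (N:ℝ)
  + ρ^2*δ^2*μk^2*(‖fk‖)^4 + 2*((1-ρ^2)*(μk+δ)+2)*δ*μk*(‖fk‖)^2

/-- Coefficient `c_{k,2}`. -/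
def ck2 (μk δ ρ ι : ℝ) : ℝ :=
  ((1-ι^2)*(μk+δ+1)^2 - δ*μk*(μk+1+δ-ι^2*δ))*ρ^2 + (δ+μk+1)*δ*μk + (μk+δ+1)^2
  - (μk+1)*ι^2*δ^2

/-- Coefficient `c_{k,3}`. -/
def ck3 (μk δ ρ ι : ℝ) (fk : ℂ) : ℝ :=
  (((3-2*ι^2)*(μk+1) + (ι^2-1)*δ*(μk-3))*ρ^2 + (δ+1-ι^2*δ)*(μk+1)) * δ*μk*(‖fk‖)^2
  + ((ι^2-1)*(μk+δ+1)^2 + 2*(ι^2-2)*μk*δ)*ρ^2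
  + (1-ι^2)*(μk+δ+2)^2 + 2*μk*δ + 2*μk + 2*δ - 1 - 2*ι^2

/-- Coefficient `c_{k,4}`. -/
def ck4 (μk δ ρ ι : ℝ) (fk : ℂ) : ℝ :=
  (1-ι^2)*ρ^2*δ^2*μk^2*(‖fk‖)^4
  + 2*δ*μk*(‖fk‖)^2*((1-ι^2)*(1-ρ^2)*(μk+δ+1) + (2-ι^2)*(1+ρ^2))

/-- The closed-form second moment `ξ_k`. -/
def xiK (M N : ℕ) (αk μk β δ ρ ι κ : ℝ) (fk : ℂ) : ℝ :=
  (β^2*αk^2*κ^2*(M:ℝ)/((δ+1)^2*(μk+1)^2))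
    * (ck1 N μk δ ρ fk * ι^2 * (M:ℝ) + ck2 μk δ ρ ι * (N:ℝ)^2 + ck3 μk δ ρ ι fk * (N:ℝ)
       + ck4 μk δ ρ ι fk)

/-- Coefficient `z_{ki,1}`. -/
def zki1 (N : ℕ) (μk μi δ ρ : ℝ) (fk fi bki : ℂ) : ℝ :=
  (μi+1-ρ^2*μi)*δ^2*(N:ℝ)^2
  + ((μi+1-ρ^2*μi)*δ^2*μk*(‖fk‖)^2 + ρ^2*δ^2*μi*(‖fi‖)^2
     + (μk+2*δ+1)*(μi+1-ρ^2*μi) + ρ^2*μi) * (N:ℝ)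
  + (2*δ*(‖fi‖)^2 + μk*(‖bki‖)^2
     + 2*δ*μk*((starRingEnd ℂ) fk * fi * (starRingEnd ℂ) bki).re)*ρ^2*μi
  + (ρ^2*δ*μi*(‖fi‖)^2 + 2*μi*(1-ρ^2) + 2)*δ*μk*(‖fk‖)^2

/-- Coefficient `z_{ki,2}`. -/
def zki2 (μk μi δ ρ ι : ℝ) : ℝ :=
  ((δ+1)*μk + (δ+1)^2 - ι^2*δ^2)*(μi+1) - (μk+δ+1-ι^2*δ)*ρ^2*δ*μi - 1

/-- Coefficient `z_{ki,3}`. -/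
def zki3 (μk μi δ ρ ι : ℝ) (fk fi : ℂ) : ℝ :=
  ((1-ι^2)*δ*(μi+1-ρ^2*μi) + μi+1)*δ*μk*(‖fk‖)^2
  + ((μi+1)*(μk+2*δ+1) - (μk+2*δ)*ρ^2*μi)*(1-ι^2)
  + (μk+δ+1-ι^2*δ)*ρ^2*δ*μi*(‖fi‖)^2

/-- Coefficient `z_{ki,4}`. -/
def zki4 (μk μi δ ρ ι : ℝ) (fk fi bki : ℂ) : ℝ :=
  ((δ*(‖fi‖)^2-2)*ρ^2*μi + 2*μi + 2)*(1-ι^2)*δ*μk*(‖fk‖)^2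
  + (1-ι^2)*ρ^2*μk*μi*((‖bki‖)^2
     + 2*δ*((starRingEnd ℂ) fk * fi * (starRingEnd ℂ) bki).re)
  + 2*(1-ι^2)*ρ^2*δ*μi*(‖fi‖)^2

/-- The closed-form interference second moment `γ_{ki}`. -/
def gammaKI (M N : ℕ) (αk αi μk μi β δ ρ ι κ : ℝ) (fk fi bki : ℂ) : ℝ :=
  (κ^2*β^2*αk*αi*(M:ℝ)/((δ+1)^2*(μk+1)*(μi+1)))
    * (zki1 N μk μi δ ρ fk fi bki * ι^2 * (M:ℝ) + zki2 μk μi δ ρ ι * (N:ℝ)^2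
       + zki3 μk μi δ ρ ι fk fi * (N:ℝ) + zki4 μk μi δ ρ ι fk fi bki)

/-- The quantity `ϖ_k`. -/
def varpiK (N : ℕ) (αk μk β δ : ℝ) (fk : ℂ) : ℝ :=
  (β*αk/((δ+1)*(μk+1))) * (δ*μk*(‖fk‖)^2 + (μk+δ+1)*(N:ℝ))

/-- The quantity `ζ`. -/
def zetaV (K N : ℕ) (p α μ : Fin K → ℝ) (β δ ρ κ : ℝ) (f : Fin K → ℂ) : ℝ :=
  ∑ s, (κ^2 * p s * β * α s / ((δ+1)*(μ s + 1)))
    * (ρ^2*δ*(μ s)*(‖f s‖)^2 + ((1-ρ^2)*δ*(μ s) + δ + μ s + 1)*(N:ℝ))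

/-- The closed-form approximate rate `R̃_k`. -/
def Rtilde (K : ℕ) (k : Fin K) (M N : ℕ) (p α μ : Fin K → ℝ)
    (β δ ρ ι κ τ σ2 σRF2 : ℝ) (f : Fin K → ℂ) (b : Fin K → ℂ) : ℝ :=
  Real.logb 2 (1 + p k * τ^2 * xiK M N (α k) (μ k) β δ ρ ι κ (f k) /
    ((∑ i ∈ Finset.univ.erase k,
        p i * τ^2 * gammaKI M N (α k) (α i) (μ k) (μ i) β δ ρ ι κ (f k) (f i) (b i))
     + τ*(1-τ) * varpiK N (α k) (μ k) β δ (f k) * zetaV K N p α μ β δ ρ κ f * (M:ℝ)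
     + τ*(σRF2+σ2) * varpiK N (α k) (μ k) β δ (f k) * (M:ℝ)))

/-- The coefficient `Γ_k` of Corollary 3 / the power scaling law. -/
def GammaK (N : ℕ) (αk μk β δ ρ ι κ τ : ℝ) (fk : ℂ) : ℝ :=
  τ^2*ι^2*κ^2*β^2*αk^2 * ck1 N μk δ ρ fk / ((δ+1)^2*(μk+1)^2)

/-- The coefficient `Γ_{ki}` of Corollary 3 / the power scaling law. -/
def GammaKI (N : ℕ) (αk αi μk μi β δ ρ ι κ τ : ℝ) (fk fi bki : ℂ) : ℝ :=
  τ^2*ι^2*κ^2*β^2*αk*αi * zki1 N μk μi δ ρ fk fi bki / ((δ+1)^2*(μk+1)*(μi+1))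

theorem tendsto_affine_div_affine (a r c s : ℝ) (hc : c ≠ 0) :
    Tendsto (fun x : ℝ => (x * a + r) / (x * c + s)) atTop (nhds (a / c)) := by
  have hinv : Tendsto (fun x : ℝ => x⁻¹) atTop (nhds 0) := tendsto_inv_atTop_zero
  have hnum : Tendsto (fun x : ℝ => a + r * x⁻¹) atTop (nhds a) := by
    simpa using (hinv.const_mul r).const_add a
  have hden : Tendsto (fun x : ℝ => c + s * x⁻¹) atTop (nhds c) := by
    simpa using (hinv.const_mul s).const_add c
  have hlim : Tendsto (fun x : ℝ => (a + r * x⁻¹) / (c + s * x⁻¹)) atTop (nhds (a / c)) :=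
    hnum.div hden hc
  refine hlim.congr' ?_
  filter_upwards [eventually_ne_atTop 0] with x hx
  rw [← mul_div_mul_left _ _ hx]
  field_simp

theorem exists_div_mul_xiK_eq (N : ℕ) (αk μk β δ ρ ι κ τ Eu : ℝ) (fk : ℂ) :
    ∃ r : ℝ, ∀ M : ℕ, M ≠ 0 → Eu / M * τ^2 * xiK M N αk μk β δ ρ ι κ fk
      = M * (Eu * GammaK N αk μk β δ ρ ι κ τ fk) + r := by
  refine ⟨Eu * τ^2 * (β^2*αk^2*κ^2/((δ+1)^2*(μk+1)^2))
    * (ck2 μk δ ρ ι * N^2 + ck3 μk δ ρ ι fk * N + ck4 μk δ ρ ι fk), fun M hM => ?_⟩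
  have hM' : (M : ℝ) ≠ 0 := Nat.cast_ne_zero.mpr hM
  simp only [xiK, GammaK, div_eq_mul_inv]
  field_simp
  ring

theorem exists_div_mul_gammaKI_eq (N : ℕ) (αk αi μk μi β δ ρ ι κ τ Eu : ℝ) (fk fi bki : ℂ) :
    ∃ r : ℝ, ∀ M : ℕ, M ≠ 0 → Eu / M * τ^2 * gammaKI M N αk αi μk μi β δ ρ ι κ fk fi bki
      = M * (Eu * GammaKI N αk αi μk μi β δ ρ ι κ τ fk fi bki) + r := by
  refine ⟨Eu * τ^2 * (κ^2*β^2*αk*αi/((δ+1)^2*(μk+1)*(μi+1)))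
    * (zki2 μk μi δ ρ ι * N^2 + zki3 μk μi δ ρ ι fk fi * N + zki4 μk μi δ ρ ι fk fi bki),
    fun M hM => ?_⟩
  have hM' : (M : ℝ) ≠ 0 := Nat.cast_ne_zero.mpr hM
  simp only [gammaKI, GammaKI, div_eq_mul_inv]
  field_simp
  ring

theorem zetaV_const_div (K N : ℕ) (α μ : Fin K → ℝ) (β δ ρ κ : ℝ) (f : Fin K → ℂ) (E x : ℝ) :
    zetaV K N (fun _ => E / x) α μ β δ ρ κ f = zetaV K N (fun _ => E) α μ β δ ρ κ f / x := by
  simp only [zetaV, Finset.sum_div]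
  refine Finset.sum_congr rfl fun s _ => ?_
  ring

theorem exists_Rtilde_div_eq (K : ℕ) (k : Fin K) (N : ℕ) (α μ : Fin K → ℝ)
    (β δ ρ ι κ τ σ2 σRF2 : ℝ) (f b : Fin K → ℂ) (Eu : ℝ) :
    ∃ r s : ℝ, ∀ M : ℕ, M ≠ 0 →
      Rtilde K k M N (fun _ => Eu / M) α μ β δ ρ ι κ τ σ2 σRF2 f b
        = Real.logb 2 (1 + (M * (Eu * GammaK N (α k) (μ k) β δ ρ ι κ τ (f k)) + r) /
          (M * ((∑ i ∈ Finset.univ.erase k,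
              Eu * GammaKI N (α k) (α i) (μ k) (μ i) β δ ρ ι κ τ (f k) (f i) (b i))
            + (σRF2 + σ2) * τ * varpiK N (α k) (μ k) β δ (f k)) + s)) := by
  obtain ⟨r, hr⟩ := exists_div_mul_xiK_eq N (α k) (μ k) β δ ρ ι κ τ Eu (f k)
  choose g hg using fun i =>
    exists_div_mul_gammaKI_eq N (α k) (α i) (μ k) (μ i) β δ ρ ι κ τ Eu (f k) (f i) (b i)
  refine ⟨r, ∑ i ∈ Finset.univ.erase k, g i
    + τ * (1 - τ) * varpiK N (α k) (μ k) β δ (f k) * zetaV K N (fun _ => Eu) α μ β δ ρ κ f,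
    fun M hM => ?_⟩
  have hM' : (M : ℝ) ≠ 0 := Nat.cast_ne_zero.mpr hM
  rw [Rtilde, hr M hM, Finset.sum_congr rfl fun i _ => hg i M hM, Finset.sum_add_distrib,
    ← Finset.mul_sum, zetaV_const_div]
  congr 3
  field_simp
  ring

theorem ck1_nonneg {μk δ ρ : ℝ} (N : ℕ) (fk : ℂ) (hμ : 0 ≤ μk) (hδ : 0 ≤ δ) (hρ : ρ^2 ≤ 1) :
    0 ≤ ck1 N μk δ ρ fk := by
  have hρ' : 0 ≤ 1 - ρ^2 := sub_nonneg.2 hρ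
  have hN : (N : ℝ) ≤ N^2 := by exact_mod_cast Nat.le_self_pow two_ne_zero N
  have hδμ : 0 ≤ δ * μk := mul_nonneg hδ hμ
  have hF : 0 ≤ ‖fk‖^2 := sq_nonneg _
  unfold ck1
  -- `ck1` is exactly the sum of these nonnegative terms
  linarith [mul_nonneg (mul_nonneg (sq_nonneg ρ) (sq_nonneg (μk+δ+1))) (sub_nonneg.2 hN),
    mul_nonneg (mul_nonneg hρ' (sq_nonneg (N : ℝ))) (mul_nonneg (sq_nonneg δ) hμ),
    mul_nonneg (sq_nonneg δ) (sq_nonneg (N : ℝ)),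
    mul_nonneg (mul_nonneg (mul_nonneg (sq_nonneg ρ) hF) (Nat.cast_nonneg N))
      (mul_nonneg hδμ (by linarith : 0 ≤ 2*μk+3*δ+2)),
    mul_nonneg (by nlinarith : 0 ≤ 1+μk-ρ^2*μk)
      (mul_nonneg (mul_nonneg (mul_nonneg (sq_nonneg δ) hμ) hF) (Nat.cast_nonneg N)),
    mul_nonneg (by nlinarith : 0 ≤ μk^2+δ^2+2*(1-ρ^2)*μk*δ+4*μk+4*δ+2) (Nat.cast_nonneg N),
    mul_nonneg (mul_nonneg (sq_nonneg ρ) (sq_nonneg δ))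
      (mul_nonneg (sq_nonneg μk) (pow_nonneg (norm_nonneg fk) 4)),
    mul_nonneg (by nlinarith : 0 ≤ 2*((1-ρ^2)*(μk+δ)+2)) (mul_nonneg hδμ hF)]

theorem zki1_nonneg {μk μi δ ρ : ℝ} (N : ℕ) (fk fi bki : ℂ) (hμk : 0 ≤ μk) (hμi : 0 ≤ μi)
    (hδ : 0 ≤ δ) (hρ : ρ^2 ≤ 1) : 0 ≤ zki1 N μk μi δ ρ fk fi bki := by
  unfold zki1
  set w := (starRingEnd ℂ) fk * fi * (starRingEnd ℂ) bki
  have hre : 0 ≤ w.re + ‖fk‖ * ‖fi‖ * ‖bki‖ := by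
    have := neg_le_of_abs_le (Complex.abs_re_le_norm w)
    simp only [w, norm_mul, Complex.norm_conj] at this
    linarith
  have hA : 0 ≤ μi + 1 - ρ^2 * μi := by nlinarith
  have hρμ : 0 ≤ ρ^2 * μi * μk := mul_nonneg (mul_nonneg (sq_nonneg ρ) hμi) hμk
  have hN := Nat.cast_nonneg (α := ℝ) N
  have hρδ : 0 ≤ ρ^2 * δ^2 := by positivity
  -- the cross term `Re w` is absorbed by `ρ²μ_iμ_k (δ‖f_k‖‖f_i‖ - ‖b_ki‖)²`
  linarith [mul_nonneg hA (mul_nonneg (sq_nonneg δ) (sq_nonneg (N : ℝ))),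
    mul_nonneg (mul_nonneg hA (mul_nonneg (mul_nonneg (sq_nonneg δ) hμk) (sq_nonneg ‖fk‖))) hN,
    mul_nonneg (mul_nonneg (mul_nonneg hρδ (sq_nonneg ‖fi‖)) hN) hμi,
    mul_nonneg (mul_nonneg (by linarith : 0 ≤ μk+2*δ+1) hA) hN,
    mul_nonneg (mul_nonneg (sq_nonneg ρ) hN) hμi,
    mul_nonneg (mul_nonneg (mul_nonneg hδ (sq_nonneg ρ)) (sq_nonneg ‖fi‖)) hμi,
    mul_nonneg hρμ (sq_nonneg (δ * ‖fk‖ * ‖fi‖ - ‖bki‖)),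
    mul_nonneg (mul_nonneg hδ hρμ) hre,
    mul_nonneg (by nlinarith : 0 ≤ 2*μi*(1-ρ^2)+2)
      (mul_nonneg (mul_nonneg hδ hμk) (sq_nonneg ‖fk‖))]

theorem GammaK_nonneg {αk μk δ ρ : ℝ} (N : ℕ) (β ι κ τ : ℝ) (fk : ℂ) (hμ : 0 ≤ μk) (hδ : 0 ≤ δ)
    (hρ : ρ^2 ≤ 1) : 0 ≤ GammaK N αk μk β δ ρ ι κ τ fk := by
  unfold GammaK
  have := ck1_nonneg N fk hμ hδ hρ
  positivity

theorem GammaKI_nonneg {αk αi μk μi δ ρ : ℝ} (N : ℕ) (β ι κ τ : ℝ) (fk fi bki : ℂ)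
    (hαk : 0 ≤ αk) (hαi : 0 ≤ αi) (hμk : 0 ≤ μk) (hμi : 0 ≤ μi) (hδ : 0 ≤ δ) (hρ : ρ^2 ≤ 1) :
    0 ≤ GammaKI N αk αi μk μi β δ ρ ι κ τ fk fi bki := by
  unfold GammaKI
  have := zki1_nonneg N fk fi bki hμk hμi hδ hρ
  positivity

theorem varpiK_pos {N : ℕ} {αk μk β δ : ℝ} (fk : ℂ) (hN : 0 < N) (hα : 0 < αk) (hμ : 0 < μk)
    (hβ : 0 < β) (hδ : 0 < δ) : 0 < varpiK N αk μk β δ fk := by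
  unfold varpiK
  positivity

theorem corollary3_power_scaling_one_over_M_general
    (K : ℕ) (k : Fin K)
    (α μ : Fin K → ℝ) (β δ ρ ι κ τ σ2 σRF2 : ℝ)
    (hα : ∀ i, 0 < α i) (hμ : ∀ i, 0 < μ i)
    (hβ : 0 < β) (hδ : 0 < δ)
    (hρ : ρ ∈ Set.Ioo (0:ℝ) 1)
    (hτ : τ ∈ Set.Ioo (0:ℝ) 1) (hσ : 0 < σ2) (hσRF : 0 < σRF2)
    (N : ℕ) (hN : 0 < N)
    (f b : Fin K → ℂ)
    (Eu : ℝ) (hEu : 0 < Eu) :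
    Tendsto (fun M : ℕ =>
        Rtilde K k M N (fun _ => Eu/(M:ℝ)) α μ β δ ρ ι κ τ σ2 σRF2 f b)
      atTop (nhds (Real.logb 2 (1 +
        Eu * GammaK N (α k) (μ k) β δ ρ ι κ τ (f k) /
        ((∑ i ∈ Finset.univ.erase k,
            Eu * GammaKI N (α k) (α i) (μ k) (μ i) β δ ρ ι κ τ (f k) (f i) (b i))
         + (σRF2+σ2) * τ * varpiK N (α k) (μ k) β δ (f k))))) := by
  obtain ⟨r, s, hR⟩ := exists_Rtilde_div_eq K k N α μ β δ ρ ι κ τ σ2 σRF2 f b Eu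
  set signal := Eu * GammaK N (α k) (μ k) β δ ρ ι κ τ (f k)
  set interference := ∑ i ∈ Finset.univ.erase k,
    Eu * GammaKI N (α k) (α i) (μ k) (μ i) β δ ρ ι κ τ (f k) (f i) (b i)
  set noise := (σRF2 + σ2) * τ * varpiK N (α k) (μ k) β δ (f k)
  have hρ2 : ρ^2 ≤ 1 := by nlinarith [hρ.1, hρ.2]
  have hsignal : 0 ≤ signal := mul_nonneg hEu.le (GammaK_nonneg N β ι κ τ (f k) (hμ k).le hδ.le hρ2)
  have hinterference : 0 ≤ interference := Finset.sum_nonneg fun i _ => mul_nonneg hEu.le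
    (GammaKI_nonneg N β ι κ τ _ _ _ (hα k).le (hα i).le (hμ k).le (hμ i).le hδ.le hρ2)
  have hnoise : 0 < noise :=
    mul_pos (mul_pos (by linarith) hτ.1) (varpiK_pos (f k) hN (hα k) (hμ k) hβ hδ)
  have hden : 0 < interference + noise := by linarith
  have hlim := ((tendsto_affine_div_affine signal r _ s hden.ne').comp
    tendsto_natCast_atTop_atTop).const_add 1
  refine ((Real.continuousAt_logb ?_).tendsto.comp hlim).congr' ?_
  · have := div_nonneg hsignal hden.le
    positivity
  · filter_upwards [eventually_ne_atTop 0] with M hM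
    exact (hR M hM).symm

/-- Corollary 3: with `p_i = E_u/M`, as `M → ∞` the closed-form rate
converges to `log₂(1 + E_uΓ_k/(Σ_{i≠k} E_uΓ_{ki} + (σ_RF²+σ²)τϖ_k))`. -/
theorem corollary3_power_scaling_one_over_M
    (K : ℕ) (hK : 2 ≤ K) (k : Fin K)
    (α μ : Fin K → ℝ) (β δ ρ ι κ τ σ2 σRF2 : ℝ)
    (hα : ∀ i, 0 < α i) (hμ : ∀ i, 0 < μ i)
    (hβ : 0 < β) (hδ : 0 < δ)
    (hρ : ρ ∈ Set.Ioo (0:ℝ) 1) (hι : ι ∈ Set.Ioc (0:ℝ) 1) (hκ : κ ∈ Set.Ioc (0:ℝ) 1)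
    (hτ : τ ∈ Set.Ioo (0:ℝ) 1) (hσ : 0 < σ2) (hσRF : 0 < σRF2)
    (N : ℕ) (hN : 0 < N)
    (f b : Fin K → ℂ)
    (hf_adm : ∀ i, ‖f i‖ ≤ N)
    (hb_adm : ∀ i, i ≠ k → ‖b i‖ ≤ N)
    (Eu : ℝ) (hEu : 0 < Eu) :
    Tendsto (fun M : ℕ =>
        Rtilde K k M N (fun _ => Eu/(M:ℝ)) α μ β δ ρ ι κ τ σ2 σRF2 f b)
      atTop (nhds (Real.logb 2 (1 +
        Eu * GammaK N (α k) (μ k) β δ ρ ι κ τ (f k) /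
        ((∑ i ∈ Finset.univ.erase k,
            Eu * GammaKI N (α k) (α i) (μ k) (μ i) β δ ρ ι κ τ (f k) (f i) (b i))
         + (σRF2+σ2) * τ * varpiK N (α k) (μ k) β δ (f k))))) :=
  corollary3_power_scaling_one_over_M_general K k α μ β δ ρ ι κ τ σ2 σRF2 hα hμ hβ hδ hρ hτ hσ hσRF
    N hN f b Eu hEu

end
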